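/- For every α ∈ ℝ, every 0 ≤ i ≤ n and every smooth f : X → ℝ, the identity e^{−αR_i} · ( (L − α σ_i)( e^{αR_i} · f ) ) = L̄_α f holds, where (L − ασ_i)g = Lg − ασ_i g; in particular all the operators L − ασ_i, 0 ≤ i ≤ n, are conjugate to the same operator L̄_α. -/

import Mathlib

open scoped BigOperators
open MeasureTheory

noncomputable section

namespace EP

/-- `d`-dimensional vectors. -/
abbrev Vec (d : ℕ) := Fin d → ℝ

/-- The phase space `X = (ℝ^d)^n × (ℝ^d)^n × (ℝ^d × ℝ^d)`,
coordinates `x = (p, q, (r₁, rₙ))`. -/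
abbrev Phase (d n : ℕ) := (Fin n → Vec d) × (Fin n → Vec d) × (Vec d × Vec d)

/-- Euclidean dot product on `ℝ^d`. -/
def dotp {d : ℕ} (a b : Vec d) : ℝ := ∑ j, a j * b j

/-- 1-based access to an `n`-tuple of vectors (defaults to `0` out of range;
all uses below are in range). -/
def nth {d n : ℕ} (v : Fin n → Vec d) (i : ℕ) : Vec d :=
  if h : 1 ≤ i ∧ i ≤ n then v ⟨i - 1, by omega⟩ else 0

/-- The coordinate direction `j` of the `i`-th (1-based) vector in `(ℝ^d)^n`. -/
def basisQ (d n : ℕ) (i : ℕ) (j : Fin d) : Fin n → Vec d :=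
  if h : 1 ≤ i ∧ i ≤ n then Pi.single (⟨i - 1, by omega⟩ : Fin n) (Pi.single j 1) else 0

/-- Coordinate direction in `X`: component `j` of `p_i`. -/
def eP (d n : ℕ) (i : ℕ) (j : Fin d) : Phase d n := (basisQ d n i j, 0, 0, 0)
/-- Coordinate direction in `X`: component `j` of `q_i`. -/
def eQ (d n : ℕ) (i : ℕ) (j : Fin d) : Phase d n := (0, basisQ d n i j, 0, 0)
/-- Coordinate direction in `X`: component `j` of `r₁`. -/
def eR1 (d n : ℕ) (j : Fin d) : Phase d n := (0, 0, Pi.single j 1, 0)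
/-- Coordinate direction in `X`: component `j` of `rₙ`. -/
def eRn (d n : ℕ) (j : Fin d) : Phase d n := (0, 0, 0, Pi.single j 1)

/-- First-order partial derivative of `f` in direction `v` at `x`. -/
def pd {d n : ℕ} (f : Phase d n → ℝ) (v x : Phase d n) : ℝ := fderiv ℝ f x v

/-- Second-order partial derivative of `f` in direction `v` at `x`. -/
def pd2 {d n : ℕ} (f : Phase d n → ℝ) (v x : Phase d n) : ℝ :=
  fderiv ℝ (fun y => fderiv ℝ f y v) x v

/-- The potential `V(q) = Σ_{i=1}^n U¹(q_i) + Σ_{i=1}^{n-1} U²(q_i - q_{i+1})`. -/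
def Vpot (d n : ℕ) (U1 U2 : Vec d → ℝ) (q : Fin n → Vec d) : ℝ :=
  (∑ i ∈ Finset.Icc 1 n, U1 (nth q i)) +
  (∑ i ∈ Finset.Icc 1 (n - 1), U2 (nth q i - nth q (i + 1)))

/-- `L₀ f = γ(T₁ Δ_{r₁} f + Tₙ Δ_{rₙ} f - r₁·∇_{r₁} f - rₙ·∇_{rₙ} f)`. -/
def gen0 (d n : ℕ) (ga T1 Tn : ℝ) (f : Phase d n → ℝ) (x : Phase d n) : ℝ :=
  ga * (T1 * ∑ j, pd2 f (eR1 d n j) x + Tn * ∑ j, pd2 f (eRn d n j) x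
      - ∑ j, x.2.2.1 j * pd f (eR1 d n j) x
      - ∑ j, x.2.2.2 j * pd f (eRn d n j) x)

/-- The first-order part
`L₁ f = λ(p₁·∇_{r₁} f + pₙ·∇_{rₙ} f - r₁·∇_{p₁} f - rₙ·∇_{pₙ} f)
  + (Σ p_i·∇_{q_i} f - Σ ∇_{q_i}V·∇_{p_i} f)`. -/
def gen1 (d n : ℕ) (U1 U2 : Vec d → ℝ) (lam : ℝ) (f : Phase d n → ℝ) (x : Phase d n) : ℝ :=
  lam * ((∑ j, nth x.1 1 j * pd f (eR1 d n j) x)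
       + (∑ j, nth x.1 n j * pd f (eRn d n j) x)
       - (∑ j, x.2.2.1 j * pd f (eP d n 1 j) x)
       - (∑ j, x.2.2.2 j * pd f (eP d n n j) x))
  + ((∑ i ∈ Finset.Icc 1 n, ∑ j, nth x.1 i j * pd f (eQ d n i j) x)
   - (∑ i ∈ Finset.Icc 1 n, ∑ j,
       fderiv ℝ (Vpot d n U1 U2) x.2.1 (basisQ d n i j) * pd f (eP d n i j) x))

/-- The generator `L = L₀ + L₁`. -/
def gen (d n : ℕ) (U1 U2 : Vec d → ℝ) (ga lam T1 Tn : ℝ)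
    (f : Phase d n → ℝ) (x : Phase d n) : ℝ :=
  gen0 d n ga T1 Tn f x + gen1 d n U1 U2 lam f x

/-- The formal adjoint `Lᵀ`. -/
def genT (d n : ℕ) (U1 U2 : Vec d → ℝ) (ga lam T1 Tn : ℝ)
    (g : Phase d n → ℝ) (x : Phase d n) : ℝ :=
  ga * (T1 * ∑ j, pd2 g (eR1 d n j) x + Tn * ∑ j, pd2 g (eRn d n j) x
      + ∑ j, x.2.2.1 j * pd g (eR1 d n j) x
      + ∑ j, x.2.2.2 j * pd g (eRn d n j) x
      + 2 * (d : ℝ) * g x)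
  - lam * ((∑ j, nth x.1 1 j * pd g (eR1 d n j) x)
         + (∑ j, nth x.1 n j * pd g (eRn d n j) x)
         - (∑ j, x.2.2.1 j * pd g (eP d n 1 j) x)
         - (∑ j, x.2.2.2 j * pd g (eP d n n j) x))
  - ((∑ i ∈ Finset.Icc 1 n, ∑ j, nth x.1 i j * pd g (eQ d n i j) x)
   - (∑ i ∈ Finset.Icc 1 n, ∑ j,
       fderiv ℝ (Vpot d n U1 U2) x.2.1 (basisQ d n i j) * pd g (eP d n i j) x))

/-- The heat flows `Φ_i`, `0 ≤ i ≤ n`. -/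
def flow (d n : ℕ) (U2 : Vec d → ℝ) (lam : ℝ) (i : ℕ) (x : Phase d n) : ℝ :=
  if i = 0 then - lam * dotp x.2.2.1 (nth x.1 1)
  else if i = n then lam * dotp x.2.2.2 (nth x.1 n)
  else ∑ j, ((nth x.1 i j + nth x.1 (i + 1) j) / 2) *
        fderiv ℝ U2 (nth x.2.1 i - nth x.2.1 (i + 1)) (Pi.single j 1)

/-- The entropy productions `σ_i = (1/Tₙ - 1/T₁) Φ_i`. -/
def sigmaF (d n : ℕ) (U2 : Vec d → ℝ) (lam T1 Tn : ℝ) (i : ℕ) (x : Phase d n) : ℝ :=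
  (1 / Tn - 1 / T1) * flow d n U2 lam i x

/-- The local energies `H_i`, `1 ≤ i ≤ n`. -/
def locH (d n : ℕ) (U1 U2 : Vec d → ℝ) (i : ℕ) (x : Phase d n) : ℝ :=
  dotp (nth x.1 i) (nth x.1 i) / 2 + U1 (nth x.2.1 i)
  + (if 2 ≤ i then U2 (nth x.2.1 (i - 1) - nth x.2.1 i) else 0) / 2
  + (if i < n then U2 (nth x.2.1 i - nth x.2.1 (i + 1)) else 0) / 2

/-- `R_i = (1/T₁)(|r₁|²/2 + Σ_{k=1}^i H_k) + (1/Tₙ)(Σ_{k=i+1}^n H_k + |rₙ|²/2)`. -/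
def Rfun (d n : ℕ) (U1 U2 : Vec d → ℝ) (T1 Tn : ℝ) (i : ℕ) (x : Phase d n) : ℝ :=
  (1 / T1) * (dotp x.2.2.1 x.2.2.1 / 2 + ∑ k ∈ Finset.Icc 1 i, locH d n U1 U2 k x)
  + (1 / Tn) * ((∑ k ∈ Finset.Icc (i + 1) n, locH d n U1 U2 k x) + dotp x.2.2.2 x.2.2.2 / 2)

/-- The total energy `G(p,q,r) = |r₁|²/2 + |rₙ|²/2 + Σ|p_i|²/2 + V(q)`. -/
def Gfun (d n : ℕ) (U1 U2 : Vec d → ℝ) (x : Phase d n) : ℝ :=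
  dotp x.2.2.1 x.2.2.1 / 2 + dotp x.2.2.2 x.2.2.2 / 2
  + (∑ i : Fin n, dotp (x.1 i) (x.1 i) / 2) + Vpot d n U1 U2 x.2.1

/-- The chain energy `H_S(p,q) = Σ|p_i|²/2 + V(q)`. -/
def HS (d n : ℕ) (U1 U2 : Vec d → ℝ) (x : Phase d n) : ℝ :=
  (∑ i : Fin n, dotp (x.1 i) (x.1 i) / 2) + Vpot d n U1 U2 x.2.1

/-- Momentum reversal `(Jf)(p,q,r) = f(-p,q,r)`. -/
def Jop {d n : ℕ} (f : Phase d n → ℝ) : Phase d n → ℝ := fun x => f (-x.1, x.2)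

/-- `L̃_α f = L f + 2αγ (r₁·∇_{r₁} f + rₙ·∇_{rₙ} f)`. -/
def genTilde (d n : ℕ) (U1 U2 : Vec d → ℝ) (ga lam T1 Tn al : ℝ)
    (f : Phase d n → ℝ) (x : Phase d n) : ℝ :=
  gen d n U1 U2 ga lam T1 Tn f x
  + 2 * al * ga * ((∑ j, x.2.2.1 j * pd f (eR1 d n j) x)
                 + (∑ j, x.2.2.2 j * pd f (eRn d n j) x))

/-- `L̄_α f = L̃_α f - ((α-α²)γ(|r₁|²/T₁ + |rₙ|²/Tₙ) - 2dαγ) f`. -/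
def genBar (d n : ℕ) (U1 U2 : Vec d → ℝ) (ga lam T1 Tn al : ℝ)
    (f : Phase d n → ℝ) (x : Phase d n) : ℝ :=
  genTilde d n U1 U2 ga lam T1 Tn al f x
  - ((al - al ^ 2) * ga * (dotp x.2.2.1 x.2.2.1 / T1 + dotp x.2.2.2 x.2.2.2 / Tn)
     - 2 * (d : ℝ) * al * ga) * f x

open Finset ContinuousLinearMap

-- dot product basics
lemma dotp_zero_right {d : ℕ} (a : Vec d) : dotp a 0 = 0 := by simp [dotp]
lemma dotp_single {d : ℕ} (a : Vec d) (j : Fin d) : dotp a (Pi.single j 1) = a j := by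
  simp [dotp, Pi.single_apply, mul_ite, Finset.sum_ite_eq']

-- nth basics
lemma nth_in {d n : ℕ} (v : Fin n → Vec d) {k : ℕ} (h1 : 1 ≤ k) (h2 : k ≤ n) :
    nth v k = v ⟨k - 1, by omega⟩ := by rw [nth, dif_pos ⟨h1, h2⟩]
lemma nth_zero {d n : ℕ} (k : ℕ) : nth (0 : Fin n → Vec d) k = 0 := by
  unfold nth; split <;> simp

lemma nth_basisQ {d n : ℕ} {i : ℕ} (h1 : 1 ≤ i) (h2 : i ≤ n) (j : Fin d) (k : ℕ) :
    nth (basisQ d n i j) k = if k = i then Pi.single j 1 else 0 := by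
  rw [basisQ, dif_pos ⟨h1, h2⟩]
  unfold nth
  split
  · rename_i h
    rw [Pi.single_apply]
    have he : ((⟨k - 1, by omega⟩ : Fin n) = ⟨i - 1, by omega⟩) ↔ k = i := by
      rw [Fin.mk.injEq]; omega
    simp only [he]
  · rename_i h
    rw [if_neg (by omega)]

-- continuous linear maps
def dotL {d : ℕ} (a : Vec d) : Vec d →L[ℝ] ℝ :=
  ∑ j, a j • ContinuousLinearMap.proj j
lemma dotL_apply {d : ℕ} (a v : Vec d) : dotL a v = dotp a v := by
  simp [dotL, dotp, ContinuousLinearMap.sum_apply]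

def nthL (d n : ℕ) (k : ℕ) : (Fin n → Vec d) →L[ℝ] Vec d :=
  if h : 1 ≤ k ∧ k ≤ n then ContinuousLinearMap.proj ⟨k - 1, by omega⟩ else 0
lemma nthL_apply {d n : ℕ} (k : ℕ) (v : Fin n → Vec d) : nthL d n k v = nth v k := by
  unfold nthL nth; split <;> simp

def piP (d n : ℕ) (k : ℕ) : Phase d n →L[ℝ] Vec d :=
  (nthL d n k).comp (ContinuousLinearMap.fst ℝ _ _)
def piQ (d n : ℕ) (k : ℕ) : Phase d n →L[ℝ] Vec d :=
  (nthL d n k).comp ((ContinuousLinearMap.fst ℝ _ _).comp (ContinuousLinearMap.snd ℝ _ _))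
def piR1 (d n : ℕ) : Phase d n →L[ℝ] Vec d :=
  (ContinuousLinearMap.fst ℝ _ _).comp
    ((ContinuousLinearMap.snd ℝ _ _).comp (ContinuousLinearMap.snd ℝ _ _))
def piRn (d n : ℕ) : Phase d n →L[ℝ] Vec d :=
  (ContinuousLinearMap.snd ℝ _ _).comp
    ((ContinuousLinearMap.snd ℝ _ _).comp (ContinuousLinearMap.snd ℝ _ _))

@[simp] lemma piP_apply {d n : ℕ} (k : ℕ) (x : Phase d n) : piP d n k x = nth x.1 k := by
  simp [piP, nthL_apply]
@[simp] lemma piQ_apply {d n : ℕ} (k : ℕ) (x : Phase d n) : piQ d n k x = nth x.2.1 k := by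
  simp [piQ, nthL_apply]
@[simp] lemma piR1_apply {d n : ℕ} (x : Phase d n) : piR1 d n x = x.2.2.1 := rfl
@[simp] lemma piRn_apply {d n : ℕ} (x : Phase d n) : piRn d n x = x.2.2.2 := rfl

-- derivative of the half square norm
lemma hasFDerivAt_quad {d : ℕ} (a : Vec d) :
    HasFDerivAt (fun b : Vec d => dotp b b / 2) (dotL a) a := by
  have h : ∀ j : Fin d, HasFDerivAt (fun b : Vec d => b j * b j / 2)
      ((2 : ℝ)⁻¹ • (a j • (ContinuousLinearMap.proj j : Vec d →L[ℝ] ℝ)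
        + a j • (ContinuousLinearMap.proj j : Vec d →L[ℝ] ℝ))) a := by
    intro j
    have hj : HasFDerivAt (fun b : Vec d => b j)
        (ContinuousLinearMap.proj j : Vec d →L[ℝ] ℝ) a :=
      (ContinuousLinearMap.proj j : Vec d →L[ℝ] ℝ).hasFDerivAt
    simpa [div_eq_inv_mul, smul_smul] using ((hj.mul hj).const_mul ((2:ℝ)⁻¹))
  have H := HasFDerivAt.fun_sum (fun j (_ : j ∈ Finset.univ) => h j)
  have : (fun b : Vec d => ∑ j, b j * b j / 2) = fun b : Vec d => dotp b b / 2 := by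
    funext b; rw [dotp, Finset.sum_div]
  rw [this] at H
  refine H.congr_fderiv ?_
  ext v
  simp only [dotL, dotp, ContinuousLinearMap.sum_apply, ContinuousLinearMap.smul_apply,
    ContinuousLinearMap.add_apply, ContinuousLinearMap.proj_apply, smul_eq_mul]
  exact Finset.sum_congr rfl fun j _ => by ring




def bet (T1 Tn : ℝ) (i k : ℕ) : ℝ := if k ≤ i then 1/T1 else 1/Tn
def wt (T1 Tn : ℝ) (i k : ℕ) : ℝ := (bet T1 Tn i k + bet T1 Tn i (k+1)) / 2

lemma Icc_one_eq_Ioc (a b : ℕ) : Finset.Icc (a+1) b = Finset.Ioc a b := by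
  ext m; simp only [Finset.mem_Icc, Finset.mem_Ioc]; omega

lemma Ioc_singleton {a b : ℕ} (h : a + 1 = b) : Finset.Ioc a b = {b} := by
  ext m; simp only [Finset.mem_Ioc, Finset.mem_singleton]; omega

lemma Rfun_flat (d n : ℕ) (U1 U2 : Vec d → ℝ) (T1 Tn : ℝ) {i : ℕ} (hi : i ≤ n) (hn : 1 ≤ n)
    (x : Phase d n) :
    Rfun d n U1 U2 T1 Tn i x
      = dotp x.2.2.1 x.2.2.1 / 2 * (1/T1) + dotp x.2.2.2 x.2.2.2 / 2 * (1/Tn)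
        + (∑ k ∈ Finset.Icc 1 n, bet T1 Tn i k *
            (dotp (nth x.1 k) (nth x.1 k) / 2 + U1 (nth x.2.1 k)))
        + (∑ k ∈ Finset.Icc 1 (n-1), wt T1 Tn i k * U2 (nth x.2.1 k - nth x.2.1 (k+1))) := by
  -- step 1 : regroup the two partial sums of local energies with weights `bet`
  have h1 : (1/T1) * (∑ k ∈ Finset.Icc 1 i, locH d n U1 U2 k x)
      + (1/Tn) * (∑ k ∈ Finset.Icc (i+1) n, locH d n U1 U2 k x)
      = ∑ k ∈ Finset.Icc 1 n, bet T1 Tn i k * locH d n U1 U2 k x := by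
    rw [Icc_one_eq_Ioc, Icc_one_eq_Ioc, Icc_one_eq_Ioc,
      ← Finset.sum_Ioc_consecutive _ (Nat.zero_le i) hi, Finset.mul_sum, Finset.mul_sum]
    congr 1
    · exact Finset.sum_congr rfl fun k hk => by
        rw [Finset.mem_Ioc] at hk; rw [bet, if_pos hk.2]
    · exact Finset.sum_congr rfl fun k hk => by
        rw [Finset.mem_Ioc] at hk; rw [bet, if_neg (by omega)]
  -- step 2 : expand `locH` and redistribute the interaction terms
  have h2 : ∑ k ∈ Finset.Icc 1 n, bet T1 Tn i k * locH d n U1 U2 k x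
      = (∑ k ∈ Finset.Icc 1 n, bet T1 Tn i k *
            (dotp (nth x.1 k) (nth x.1 k) / 2 + U1 (nth x.2.1 k)))
        + (∑ k ∈ Finset.Icc 1 (n-1), wt T1 Tn i k * U2 (nth x.2.1 k - nth x.2.1 (k+1))) := by
    have hexp : ∀ k ∈ Finset.Icc 1 n, bet T1 Tn i k * locH d n U1 U2 k x
        = bet T1 Tn i k * (dotp (nth x.1 k) (nth x.1 k) / 2 + U1 (nth x.2.1 k))
          + bet T1 Tn i k * ((if 2 ≤ k then U2 (nth x.2.1 (k-1) - nth x.2.1 k) else 0) / 2)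
          + bet T1 Tn i k * ((if k < n then U2 (nth x.2.1 k - nth x.2.1 (k+1)) else 0) / 2) := by
      intro k _; rw [locH]; ring
    rw [Finset.sum_congr rfl hexp, Finset.sum_add_distrib, Finset.sum_add_distrib]
    -- the left-interaction sum
    have hC : ∑ k ∈ Finset.Icc 1 n, bet T1 Tn i k *
          ((if 2 ≤ k then U2 (nth x.2.1 (k-1) - nth x.2.1 k) else 0) / 2)
        = ∑ k ∈ Finset.Icc 1 (n-1), bet T1 Tn i (k+1) *
            (U2 (nth x.2.1 k - nth x.2.1 (k+1)) / 2) := by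
      rw [Icc_one_eq_Ioc, ← Finset.sum_Ioc_consecutive _ (Nat.zero_le 1) hn,
        Ioc_singleton rfl, Finset.sum_singleton, if_neg (by omega)]
      have hmap : Finset.Ioc 1 n = (Finset.Ioc 0 (n-1)).map (addRightEmbedding 1) := by
        rw [Finset.map_add_right_Ioc]; congr 1; omega
      rw [hmap, Finset.sum_map, Icc_one_eq_Ioc]
      simp only [addRightEmbedding_apply]
      have hcg : ∀ k ∈ Finset.Ioc 0 (n-1), bet T1 Tn i (k+1) *
            ((if 2 ≤ k+1 then U2 (nth x.2.1 (k+1-1) - nth x.2.1 (k+1)) else 0) / 2)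
          = bet T1 Tn i (k+1) * (U2 (nth x.2.1 k - nth x.2.1 (k+1)) / 2) := by
        intro k hk; rw [Finset.mem_Ioc] at hk
        rw [if_pos (by omega), show k+1-1 = k from rfl]
      rw [Finset.sum_congr rfl hcg]
      ring
    -- the right-interaction sum
    have hD : ∑ k ∈ Finset.Icc 1 n, bet T1 Tn i k *
          ((if k < n then U2 (nth x.2.1 k - nth x.2.1 (k+1)) else 0) / 2)
        = ∑ k ∈ Finset.Icc 1 (n-1), bet T1 Tn i k *
            (U2 (nth x.2.1 k - nth x.2.1 (k+1)) / 2) := by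
      rw [Icc_one_eq_Ioc,
        ← Finset.sum_Ioc_consecutive _ (Nat.zero_le (n-1)) (Nat.sub_le n 1),
        Ioc_singleton (by omega : n - 1 + 1 = n), Finset.sum_singleton,
        if_neg (by omega), Icc_one_eq_Ioc]
      have hcg : ∀ k ∈ Finset.Ioc 0 (n-1), bet T1 Tn i k *
            ((if k < n then U2 (nth x.2.1 k - nth x.2.1 (k+1)) else 0) / 2)
          = bet T1 Tn i k * (U2 (nth x.2.1 k - nth x.2.1 (k+1)) / 2) := by
        intro k hk; rw [Finset.mem_Ioc] at hk; rw [if_pos (by omega)]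
      rw [Finset.sum_congr rfl hcg]
      ring
    rw [hC, hD]
    have hw : (∑ k ∈ Finset.Icc 1 (n-1), bet T1 Tn i (k+1) *
          (U2 (nth x.2.1 k - nth x.2.1 (k+1)) / 2))
        + (∑ k ∈ Finset.Icc 1 (n-1), bet T1 Tn i k *
          (U2 (nth x.2.1 k - nth x.2.1 (k+1)) / 2))
        = ∑ k ∈ Finset.Icc 1 (n-1), wt T1 Tn i k * U2 (nth x.2.1 k - nth x.2.1 (k+1)) := by
      rw [← Finset.sum_add_distrib]
      exact Finset.sum_congr rfl fun k _ => by rw [wt]; ring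
    linear_combination hw
  rw [h2] at h1
  rw [Rfun]
  linear_combination h1

-- ## The derivative of `Rfun`
def DR (d n : ℕ) (U1 U2 : Vec d → ℝ) (T1 Tn : ℝ) (i : ℕ) (x : Phase d n) :
    Phase d n →L[ℝ] ℝ :=
  (1/T1) • ((dotL x.2.2.1).comp (piR1 d n)) + (1/Tn) • ((dotL x.2.2.2).comp (piRn d n))
  + ∑ k ∈ Finset.Icc 1 n, bet T1 Tn i k •
      ((dotL (nth x.1 k)).comp (piP d n k) + (fderiv ℝ U1 (nth x.2.1 k)).comp (piQ d n k))
  + ∑ k ∈ Finset.Icc 1 (n-1), wt T1 Tn i k •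
      ((fderiv ℝ U2 (nth x.2.1 k - nth x.2.1 (k+1))).comp (piQ d n k - piQ d n (k+1)))

lemma DR_apply {d n : ℕ} (U1 U2 : Vec d → ℝ) (T1 Tn : ℝ) (i : ℕ) (x v : Phase d n) :
    DR d n U1 U2 T1 Tn i x v
      = (1/T1) * dotp x.2.2.1 v.2.2.1 + (1/Tn) * dotp x.2.2.2 v.2.2.2
        + (∑ k ∈ Finset.Icc 1 n, bet T1 Tn i k *
            (dotp (nth x.1 k) (nth v.1 k) + fderiv ℝ U1 (nth x.2.1 k) (nth v.2.1 k)))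
        + (∑ k ∈ Finset.Icc 1 (n-1), wt T1 Tn i k *
            fderiv ℝ U2 (nth x.2.1 k - nth x.2.1 (k+1)) (nth v.2.1 k - nth v.2.1 (k+1))) := by
  simp only [DR, ContinuousLinearMap.add_apply, ContinuousLinearMap.smul_apply,
    ContinuousLinearMap.comp_apply, ContinuousLinearMap.sum_apply,
    ContinuousLinearMap.sub_apply, dotL_apply, smul_eq_mul,
    piP_apply, piQ_apply, piR1_apply, piRn_apply, map_sub]

lemma hasFDerivAt_Rfun {d n : ℕ} {U1 U2 : Vec d → ℝ} {T1 Tn : ℝ} {i : ℕ}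
    (hU1 : ContDiff ℝ (⊤ : ℕ∞) U1) (hU2 : ContDiff ℝ (⊤ : ℕ∞) U2)
    (hi : i ≤ n) (hn : 1 ≤ n) (x : Phase d n) :
    HasFDerivAt (Rfun d n U1 U2 T1 Tn i) (DR d n U1 U2 T1 Tn i x) x := by
  have hdU1 : Differentiable ℝ U1 := hU1.differentiable (by simp)
  have hdU2 : Differentiable ℝ U2 := hU2.differentiable (by simp)
  have hfun : Rfun d n U1 U2 T1 Tn i = fun y : Phase d n =>
      dotp (piR1 d n y) (piR1 d n y) / 2 * (1/T1) + dotp (piRn d n y) (piRn d n y) / 2 * (1/Tn)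
      + (∑ k ∈ Finset.Icc 1 n, bet T1 Tn i k *
          (dotp (piP d n k y) (piP d n k y) / 2 + U1 (piQ d n k y)))
      + (∑ k ∈ Finset.Icc 1 (n-1), wt T1 Tn i k * U2 ((piQ d n k - piQ d n (k+1)) y)) := by
    funext y
    rw [Rfun_flat d n U1 U2 T1 Tn hi hn y]
    simp [ContinuousLinearMap.sub_apply]
  rw [hfun]
  unfold DR
  apply HasFDerivAt.add
  apply HasFDerivAt.add
  apply HasFDerivAt.add
  · exact ((hasFDerivAt_quad (piR1 d n x)).comp x (piR1 d n).hasFDerivAt).mul_const (1/T1)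
  · exact ((hasFDerivAt_quad (piRn d n x)).comp x (piRn d n).hasFDerivAt).mul_const (1/Tn)
  · apply HasFDerivAt.fun_sum
    intro k _
    apply HasFDerivAt.const_mul
    apply HasFDerivAt.add
    · have h := (hasFDerivAt_quad (piP d n k x)).comp x (piP d n k).hasFDerivAt
      rw [piP_apply] at h; exact h
    · have h := ((hdU1 (piQ d n k x)).hasFDerivAt).comp x (piQ d n k).hasFDerivAt
      rw [piQ_apply] at h; exact h
  · apply HasFDerivAt.fun_sum
    intro k _
    apply HasFDerivAt.const_mul
    have h := ((hdU2 ((piQ d n k - piQ d n (k+1)) x)).hasFDerivAt).comp x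
      (piQ d n k - piQ d n (k+1)).hasFDerivAt
    have he : (piQ d n k - piQ d n (k+1)) x = nth x.2.1 k - nth x.2.1 (k+1) := by
      simp [ContinuousLinearMap.sub_apply]
    rw [he] at h; exact h

-- components of the coordinate directions
@[simp] lemma eR1_1 {d n : ℕ} (j : Fin d) : (eR1 d n j).1 = 0 := rfl
@[simp] lemma eR1_21 {d n : ℕ} (j : Fin d) : (eR1 d n j).2.1 = 0 := rfl
@[simp] lemma eR1_221 {d n : ℕ} (j : Fin d) : (eR1 d n j).2.2.1 = Pi.single j 1 := rfl
@[simp] lemma eR1_222 {d n : ℕ} (j : Fin d) : (eR1 d n j).2.2.2 = 0 := rfl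
@[simp] lemma eRn_1 {d n : ℕ} (j : Fin d) : (eRn d n j).1 = 0 := rfl
@[simp] lemma eRn_21 {d n : ℕ} (j : Fin d) : (eRn d n j).2.1 = 0 := rfl
@[simp] lemma eRn_221 {d n : ℕ} (j : Fin d) : (eRn d n j).2.2.1 = 0 := rfl
@[simp] lemma eRn_222 {d n : ℕ} (j : Fin d) : (eRn d n j).2.2.2 = Pi.single j 1 := rfl
@[simp] lemma eP_1 {d n : ℕ} (m : ℕ) (j : Fin d) : (eP d n m j).1 = basisQ d n m j := rfl
@[simp] lemma eP_21 {d n : ℕ} (m : ℕ) (j : Fin d) : (eP d n m j).2.1 = 0 := rfl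
@[simp] lemma eP_221 {d n : ℕ} (m : ℕ) (j : Fin d) : (eP d n m j).2.2.1 = 0 := rfl
@[simp] lemma eP_222 {d n : ℕ} (m : ℕ) (j : Fin d) : (eP d n m j).2.2.2 = 0 := rfl
@[simp] lemma eQ_1 {d n : ℕ} (m : ℕ) (j : Fin d) : (eQ d n m j).1 = 0 := rfl
@[simp] lemma eQ_21 {d n : ℕ} (m : ℕ) (j : Fin d) : (eQ d n m j).2.1 = basisQ d n m j := rfl
@[simp] lemma eQ_221 {d n : ℕ} (m : ℕ) (j : Fin d) : (eQ d n m j).2.2.1 = 0 := rfl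
@[simp] lemma eQ_222 {d n : ℕ} (m : ℕ) (j : Fin d) : (eQ d n m j).2.2.2 = 0 := rfl

lemma pd_R_eR1 {d n : ℕ} {U1 U2 : Vec d → ℝ} {T1 Tn : ℝ} {i : ℕ}
    (hU1 : ContDiff ℝ (⊤ : ℕ∞) U1) (hU2 : ContDiff ℝ (⊤ : ℕ∞) U2)
    (hi : i ≤ n) (hn : 1 ≤ n) (j : Fin d) (x : Phase d n) :
    pd (Rfun d n U1 U2 T1 Tn i) (eR1 d n j) x = x.2.2.1 j * (1/T1) := by
  rw [pd, (hasFDerivAt_Rfun hU1 hU2 hi hn x).fderiv, DR_apply]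
  simp [nth_zero, dotp_zero_right, dotp_single]
  ring

lemma pd_R_eRn {d n : ℕ} {U1 U2 : Vec d → ℝ} {T1 Tn : ℝ} {i : ℕ}
    (hU1 : ContDiff ℝ (⊤ : ℕ∞) U1) (hU2 : ContDiff ℝ (⊤ : ℕ∞) U2)
    (hi : i ≤ n) (hn : 1 ≤ n) (j : Fin d) (x : Phase d n) :
    pd (Rfun d n U1 U2 T1 Tn i) (eRn d n j) x = x.2.2.2 j * (1/Tn) := by
  rw [pd, (hasFDerivAt_Rfun hU1 hU2 hi hn x).fderiv, DR_apply]
  simp [nth_zero, dotp_zero_right, dotp_single]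
  ring

lemma pd_R_eP {d n : ℕ} {U1 U2 : Vec d → ℝ} {T1 Tn : ℝ} {i : ℕ}
    (hU1 : ContDiff ℝ (⊤ : ℕ∞) U1) (hU2 : ContDiff ℝ (⊤ : ℕ∞) U2)
    (hi : i ≤ n) (hn : 1 ≤ n) {m : ℕ} (h1 : 1 ≤ m) (h2 : m ≤ n) (j : Fin d) (x : Phase d n) :
    pd (Rfun d n U1 U2 T1 Tn i) (eP d n m j) x = bet T1 Tn i m * nth x.1 m j := by
  rw [pd, (hasFDerivAt_Rfun hU1 hU2 hi hn x).fderiv, DR_apply]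
  have hcg : ∀ k ∈ Finset.Icc 1 n, bet T1 Tn i k *
        (dotp (nth x.1 k) (nth (eP d n m j).1 k)
          + fderiv ℝ U1 (nth x.2.1 k) (nth (eP d n m j).2.1 k))
      = if k = m then bet T1 Tn i k * nth x.1 k j else 0 := by
    intro k _
    rw [eP_1, eP_21, nth_basisQ h1 h2, nth_zero]
    by_cases h : k = m
    · rw [if_pos h, if_pos h]; simp [dotp_single]
    · rw [if_neg h, if_neg h]; simp [dotp_zero_right]
  rw [Finset.sum_congr rfl hcg, Finset.sum_ite_eq' (Finset.Icc 1 n) m,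
    if_pos (Finset.mem_Icc.mpr ⟨h1, h2⟩)]
  simp [nth_zero, dotp_zero_right]

lemma pd_R_eQ {d n : ℕ} {U1 U2 : Vec d → ℝ} {T1 Tn : ℝ} {i : ℕ}
    (hU1 : ContDiff ℝ (⊤ : ℕ∞) U1) (hU2 : ContDiff ℝ (⊤ : ℕ∞) U2)
    (hi : i ≤ n) (hn : 1 ≤ n) {m : ℕ} (h1 : 1 ≤ m) (h2 : m ≤ n) (j : Fin d) (x : Phase d n) :
    pd (Rfun d n U1 U2 T1 Tn i) (eQ d n m j) x
      = bet T1 Tn i m * fderiv ℝ U1 (nth x.2.1 m) (Pi.single j 1)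
        + (if m ≤ n-1 then wt T1 Tn i m *
            fderiv ℝ U2 (nth x.2.1 m - nth x.2.1 (m+1)) (Pi.single j 1) else 0)
        - (if 2 ≤ m then wt T1 Tn i (m-1) *
            fderiv ℝ U2 (nth x.2.1 (m-1) - nth x.2.1 (m-1+1)) (Pi.single j 1) else 0) := by
  rw [pd, (hasFDerivAt_Rfun hU1 hU2 hi hn x).fderiv, DR_apply]
  have hU1part : ∀ k ∈ Finset.Icc 1 n, bet T1 Tn i k *
        (dotp (nth x.1 k) (nth (eQ d n m j).1 k)
          + fderiv ℝ U1 (nth x.2.1 k) (nth (eQ d n m j).2.1 k))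
      = if k = m then bet T1 Tn i k * fderiv ℝ U1 (nth x.2.1 k) (Pi.single j 1) else 0 := by
    intro k _
    rw [eQ_1, eQ_21, nth_basisQ h1 h2, nth_zero]
    by_cases h : k = m
    · rw [if_pos h, if_pos h]; simp [dotp_zero_right]
    · rw [if_neg h, if_neg h]; simp [dotp_zero_right]
  have hU2part : ∀ k ∈ Finset.Icc 1 (n-1), wt T1 Tn i k *
        fderiv ℝ U2 (nth x.2.1 k - nth x.2.1 (k+1))
          (nth (eQ d n m j).2.1 k - nth (eQ d n m j).2.1 (k+1))
      = (if k = m then wt T1 Tn i k *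
            fderiv ℝ U2 (nth x.2.1 k - nth x.2.1 (k+1)) (Pi.single j 1) else 0)
        - (if k = m-1 then wt T1 Tn i k *
            fderiv ℝ U2 (nth x.2.1 k - nth x.2.1 (k+1)) (Pi.single j 1) else 0) := by
    intro k hk
    rw [Finset.mem_Icc] at hk
    rw [eQ_21, nth_basisQ h1 h2, nth_basisQ h1 h2]
    by_cases hk1 : k = m
    · have hk2 : ¬ (k + 1 = m) := by omega
      have hk3 : ¬ (k = m - 1) := by omega
      rw [if_pos hk1, if_neg hk2, if_pos hk1, if_neg hk3]
      simp
    · by_cases hk2 : k + 1 = m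
      · have hk3 : k = m - 1 := by omega
        rw [if_neg hk1, if_pos hk2, if_neg hk1, if_pos hk3]
        simp
      · have hk3 : ¬ (k = m - 1) := by omega
        rw [if_neg hk1, if_neg hk2, if_neg hk1, if_neg hk3]
        simp
  rw [Finset.sum_congr rfl hU1part, Finset.sum_congr rfl hU2part,
    Finset.sum_ite_eq' (Finset.Icc 1 n) m, Finset.sum_sub_distrib,
    Finset.sum_ite_eq' (Finset.Icc 1 (n-1)) m, Finset.sum_ite_eq' (Finset.Icc 1 (n-1)) (m-1),
    if_pos (Finset.mem_Icc.mpr ⟨h1, h2⟩)]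
  have e1 : (if m ∈ Finset.Icc 1 (n-1) then wt T1 Tn i m *
        fderiv ℝ U2 (nth x.2.1 m - nth x.2.1 (m+1)) (Pi.single j 1) else 0)
      = (if m ≤ n-1 then wt T1 Tn i m *
        fderiv ℝ U2 (nth x.2.1 m - nth x.2.1 (m+1)) (Pi.single j 1) else 0) :=
    if_congr (by rw [Finset.mem_Icc]; exact ⟨fun h => h.2, fun h => ⟨h1, h⟩⟩) rfl rfl
  have e2 : (if m-1 ∈ Finset.Icc 1 (n-1) then wt T1 Tn i (m-1) *
        fderiv ℝ U2 (nth x.2.1 (m-1) - nth x.2.1 (m-1+1)) (Pi.single j 1) else 0)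
      = (if 2 ≤ m then wt T1 Tn i (m-1) *
        fderiv ℝ U2 (nth x.2.1 (m-1) - nth x.2.1 (m-1+1)) (Pi.single j 1) else 0) :=
    if_congr (by simp only [Finset.mem_Icc]; omega) rfl rfl
  rw [e1, e2]
  simp [nth_zero, dotp_zero_right]
  ring

lemma pd_R_eR1_fun {d n : ℕ} {U1 U2 : Vec d → ℝ} {T1 Tn : ℝ} {i : ℕ}
    (hU1 : ContDiff ℝ (⊤ : ℕ∞) U1) (hU2 : ContDiff ℝ (⊤ : ℕ∞) U2)
    (hi : i ≤ n) (hn : 1 ≤ n) (j : Fin d) :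
    (fun y : Phase d n => fderiv ℝ (Rfun d n U1 U2 T1 Tn i) y (eR1 d n j))
      = fun y => y.2.2.1 j * (1/T1) :=
  funext fun y => pd_R_eR1 hU1 hU2 hi hn j y

lemma pd_R_eRn_fun {d n : ℕ} {U1 U2 : Vec d → ℝ} {T1 Tn : ℝ} {i : ℕ}
    (hU1 : ContDiff ℝ (⊤ : ℕ∞) U1) (hU2 : ContDiff ℝ (⊤ : ℕ∞) U2)
    (hi : i ≤ n) (hn : 1 ≤ n) (j : Fin d) :
    (fun y : Phase d n => fderiv ℝ (Rfun d n U1 U2 T1 Tn i) y (eRn d n j))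
      = fun y => y.2.2.2 j * (1/Tn) :=
  funext fun y => pd_R_eRn hU1 hU2 hi hn j y


-- ## The derivative of `Vpot`
def DV (d n : ℕ) (U1 U2 : Vec d → ℝ) (q : Fin n → Vec d) : (Fin n → Vec d) →L[ℝ] ℝ :=
  (∑ k ∈ Finset.Icc 1 n, (fderiv ℝ U1 (nth q k)).comp (nthL d n k))
  + (∑ k ∈ Finset.Icc 1 (n-1), (fderiv ℝ U2 (nth q k - nth q (k+1))).comp
      (nthL d n k - nthL d n (k+1)))

lemma DV_apply {d n : ℕ} (U1 U2 : Vec d → ℝ) (q w : Fin n → Vec d) :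
    DV d n U1 U2 q w
      = (∑ k ∈ Finset.Icc 1 n, fderiv ℝ U1 (nth q k) (nth w k))
        + (∑ k ∈ Finset.Icc 1 (n-1), fderiv ℝ U2 (nth q k - nth q (k+1))
            (nth w k - nth w (k+1))) := by
  simp only [DV, ContinuousLinearMap.add_apply, ContinuousLinearMap.comp_apply,
    ContinuousLinearMap.sum_apply, ContinuousLinearMap.sub_apply, nthL_apply, map_sub]

lemma hasFDerivAt_Vpot {d n : ℕ} {U1 U2 : Vec d → ℝ}
    (hU1 : ContDiff ℝ (⊤ : ℕ∞) U1) (hU2 : ContDiff ℝ (⊤ : ℕ∞) U2) (q : Fin n → Vec d) :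
    HasFDerivAt (Vpot d n U1 U2) (DV d n U1 U2 q) q := by
  have hdU1 : Differentiable ℝ U1 := hU1.differentiable (by simp)
  have hdU2 : Differentiable ℝ U2 := hU2.differentiable (by simp)
  have hfun : Vpot d n U1 U2 = fun p : Fin n → Vec d =>
      (∑ k ∈ Finset.Icc 1 n, U1 (nthL d n k p))
      + (∑ k ∈ Finset.Icc 1 (n-1), U2 ((nthL d n k - nthL d n (k+1)) p)) := by
    funext p
    rw [Vpot]
    congr 1
    · exact Finset.sum_congr rfl fun k _ => by rw [nthL_apply]
    · exact Finset.sum_congr rfl fun k _ => by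
        rw [ContinuousLinearMap.sub_apply, nthL_apply, nthL_apply]
  rw [hfun]
  unfold DV
  apply HasFDerivAt.add
  · apply HasFDerivAt.fun_sum
    intro k _
    have h := ((hdU1 (nthL d n k q)).hasFDerivAt).comp q (nthL d n k).hasFDerivAt
    rw [nthL_apply] at h; exact h
  · apply HasFDerivAt.fun_sum
    intro k _
    have h := ((hdU2 ((nthL d n k - nthL d n (k+1)) q)).hasFDerivAt).comp q
      (nthL d n k - nthL d n (k+1)).hasFDerivAt
    have he : (nthL d n k - nthL d n (k+1)) q = nth q k - nth q (k+1) := by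
      rw [ContinuousLinearMap.sub_apply, nthL_apply, nthL_apply]
    rw [he] at h; exact h

lemma fderiv_Vpot_basisQ {d n : ℕ} {U1 U2 : Vec d → ℝ}
    (hU1 : ContDiff ℝ (⊤ : ℕ∞) U1) (hU2 : ContDiff ℝ (⊤ : ℕ∞) U2)
    {m : ℕ} (h1 : 1 ≤ m) (h2 : m ≤ n) (j : Fin d) (q : Fin n → Vec d) :
    fderiv ℝ (Vpot d n U1 U2) q (basisQ d n m j)
      = fderiv ℝ U1 (nth q m) (Pi.single j 1)
        + (if m ≤ n-1 then fderiv ℝ U2 (nth q m - nth q (m+1)) (Pi.single j 1) else 0)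
        - (if 2 ≤ m then fderiv ℝ U2 (nth q (m-1) - nth q (m-1+1)) (Pi.single j 1) else 0) := by
  rw [(hasFDerivAt_Vpot hU1 hU2 q).fderiv, DV_apply]
  have hU1part : ∀ k ∈ Finset.Icc 1 n,
      fderiv ℝ U1 (nth q k) (nth (basisQ d n m j) k)
      = if k = m then fderiv ℝ U1 (nth q k) (Pi.single j 1) else 0 := by
    intro k _
    rw [nth_basisQ h1 h2]
    by_cases h : k = m
    · rw [if_pos h, if_pos h]
    · rw [if_neg h, if_neg h]; simp
  have hU2part : ∀ k ∈ Finset.Icc 1 (n-1),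
      fderiv ℝ U2 (nth q k - nth q (k+1)) (nth (basisQ d n m j) k - nth (basisQ d n m j) (k+1))
      = (if k = m then fderiv ℝ U2 (nth q k - nth q (k+1)) (Pi.single j 1) else 0)
        - (if k = m-1 then fderiv ℝ U2 (nth q k - nth q (k+1)) (Pi.single j 1) else 0) := by
    intro k hk
    rw [Finset.mem_Icc] at hk
    rw [nth_basisQ h1 h2, nth_basisQ h1 h2]
    by_cases hk1 : k = m
    · have hk2 : ¬ (k + 1 = m) := by omega
      have hk3 : ¬ (k = m - 1) := by omega
      rw [if_pos hk1, if_neg hk2, if_pos hk1, if_neg hk3]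
      simp
    · by_cases hk2 : k + 1 = m
      · have hk3 : k = m - 1 := by omega
        rw [if_neg hk1, if_pos hk2, if_neg hk1, if_pos hk3]
        simp
      · have hk3 : ¬ (k = m - 1) := by omega
        rw [if_neg hk1, if_neg hk2, if_neg hk1, if_neg hk3]
        simp
  rw [Finset.sum_congr rfl hU1part, Finset.sum_congr rfl hU2part,
    Finset.sum_ite_eq' (Finset.Icc 1 n) m, Finset.sum_sub_distrib,
    Finset.sum_ite_eq' (Finset.Icc 1 (n-1)) m, Finset.sum_ite_eq' (Finset.Icc 1 (n-1)) (m-1),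
    if_pos (Finset.mem_Icc.mpr ⟨h1, h2⟩)]
  have e1 : (if m ∈ Finset.Icc 1 (n-1) then
        fderiv ℝ U2 (nth q m - nth q (m+1)) (Pi.single j 1) else 0)
      = (if m ≤ n-1 then fderiv ℝ U2 (nth q m - nth q (m+1)) (Pi.single j 1) else 0) :=
    if_congr (by simp only [Finset.mem_Icc]; omega) rfl rfl
  have e2 : (if m-1 ∈ Finset.Icc 1 (n-1) then
        fderiv ℝ U2 (nth q (m-1) - nth q (m-1+1)) (Pi.single j 1) else 0)
      = (if 2 ≤ m then fderiv ℝ U2 (nth q (m-1) - nth q (m-1+1)) (Pi.single j 1) else 0) :=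
    if_congr (by simp only [Finset.mem_Icc]; omega) rfl rfl
  rw [e1, e2]
  ring


-- ## sum helpers
lemma sum_if_pull {d : ℕ} (c : Prop) [Decidable c] (g : Fin d → ℝ) :
    (∑ j, if c then g j else 0) = if c then (∑ j, g j) else 0 := by
  split_ifs <;> simp

-- ## weight difference identities
lemma wt_sub_bet_ne {T1 Tn : ℝ} {i k : ℕ} (h : k ≠ i) :
    wt T1 Tn i k - bet T1 Tn i k = 0 := by
  unfold wt bet
  split_ifs <;> first | ring1 | (exfalso; omega)

lemma wt_sub_bet_eq {T1 Tn : ℝ} {i : ℕ} :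
    wt T1 Tn i i - bet T1 Tn i i = (1/Tn - 1/T1)/2 := by
  unfold wt bet
  rw [if_pos (le_refl i), if_neg (by omega : ¬ i + 1 ≤ i)]
  ring

lemma wt_pred_sub_bet_ne {T1 Tn : ℝ} {i k : ℕ} (hk : 2 ≤ k) (h : k ≠ i + 1) :
    wt T1 Tn i (k-1) - bet T1 Tn i k = 0 := by
  unfold wt bet
  split_ifs <;> first | ring1 | (exfalso; omega)

lemma wt_pred_sub_bet_eq {T1 Tn : ℝ} {i : ℕ} :
    wt T1 Tn i (i+1-1) - bet T1 Tn i (i+1) = (1/T1 - 1/Tn)/2 := by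
  simp only [Nat.add_sub_cancel]
  unfold wt bet
  split_ifs <;> first | ring1 | (exfalso; omega)

-- ## `gen1` applied to `Rfun` gives the entropy production
lemma gen1_R {d n : ℕ} {U1 U2 : Vec d → ℝ} {lam T1 Tn : ℝ} {i : ℕ}
    (hU1 : ContDiff ℝ (⊤ : ℕ∞) U1) (hU2 : ContDiff ℝ (⊤ : ℕ∞) U2)
    (hn : 2 ≤ n) (hi : i ≤ n) (x : Phase d n) :
    gen1 d n U1 U2 lam (Rfun d n U1 U2 T1 Tn i) x = sigmaF d n U2 lam T1 Tn i x := by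
  have hn1 : 1 ≤ n := by omega
  rw [gen1]
  -- rewrite the four r-sums
  have er1 : (∑ j, nth x.1 1 j * pd (Rfun d n U1 U2 T1 Tn i) (eR1 d n j) x)
      = ∑ j, nth x.1 1 j * (x.2.2.1 j * (1/T1)) :=
    Finset.sum_congr rfl fun j _ => by rw [pd_R_eR1 hU1 hU2 hi hn1 j x]
  have ern : (∑ j, nth x.1 n j * pd (Rfun d n U1 U2 T1 Tn i) (eRn d n j) x)
      = ∑ j, nth x.1 n j * (x.2.2.2 j * (1/Tn)) :=
    Finset.sum_congr rfl fun j _ => by rw [pd_R_eRn hU1 hU2 hi hn1 j x]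
  have ep1 : (∑ j, x.2.2.1 j * pd (Rfun d n U1 U2 T1 Tn i) (eP d n 1 j) x)
      = ∑ j, x.2.2.1 j * (bet T1 Tn i 1 * nth x.1 1 j) :=
    Finset.sum_congr rfl fun j _ => by rw [pd_R_eP hU1 hU2 hi hn1 (le_refl 1) hn1 j x]
  have epn : (∑ j, x.2.2.2 j * pd (Rfun d n U1 U2 T1 Tn i) (eP d n n j) x)
      = ∑ j, x.2.2.2 j * (bet T1 Tn i n * nth x.1 n j) :=
    Finset.sum_congr rfl fun j _ => by rw [pd_R_eP hU1 hU2 hi hn1 hn1 (le_refl n) j x]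
  rw [er1, ern, ep1, epn]
  -- reduce the Hamiltonian double sums
  have hHam : (∑ k ∈ Finset.Icc 1 n, ∑ j, nth x.1 k j *
        pd (Rfun d n U1 U2 T1 Tn i) (eQ d n k j) x)
      - (∑ k ∈ Finset.Icc 1 n, ∑ j, fderiv ℝ (Vpot d n U1 U2) x.2.1 (basisQ d n k j) *
        pd (Rfun d n U1 U2 T1 Tn i) (eP d n k j) x)
      = ∑ k ∈ Finset.Icc 1 n,
          ((if k ≤ n-1 then (wt T1 Tn i k - bet T1 Tn i k) *
              (∑ j, nth x.1 k j *
                fderiv ℝ U2 (nth x.2.1 k - nth x.2.1 (k+1)) (Pi.single j 1)) else 0)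
           - (if 2 ≤ k then (wt T1 Tn i (k-1) - bet T1 Tn i k) *
              (∑ j, nth x.1 k j *
                fderiv ℝ U2 (nth x.2.1 (k-1) - nth x.2.1 (k-1+1)) (Pi.single j 1)) else 0)) := by
    rw [← Finset.sum_sub_distrib]
    refine Finset.sum_congr rfl fun k hk => ?_
    rw [Finset.mem_Icc] at hk
    have hinner : ∀ j : Fin d, nth x.1 k j * pd (Rfun d n U1 U2 T1 Tn i) (eQ d n k j) x
        - fderiv ℝ (Vpot d n U1 U2) x.2.1 (basisQ d n k j) *
          pd (Rfun d n U1 U2 T1 Tn i) (eP d n k j) x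
        = (if k ≤ n-1 then (wt T1 Tn i k - bet T1 Tn i k) *
            (nth x.1 k j * fderiv ℝ U2 (nth x.2.1 k - nth x.2.1 (k+1)) (Pi.single j 1)) else 0)
          - (if 2 ≤ k then (wt T1 Tn i (k-1) - bet T1 Tn i k) *
            (nth x.1 k j * fderiv ℝ U2 (nth x.2.1 (k-1) - nth x.2.1 (k-1+1))
              (Pi.single j 1)) else 0) := by
      intro j
      rw [pd_R_eQ hU1 hU2 hi hn1 hk.1 hk.2 j x, pd_R_eP hU1 hU2 hi hn1 hk.1 hk.2 j x,
        fderiv_Vpot_basisQ hU1 hU2 hk.1 hk.2 j x.2.1]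
      split_ifs <;> ring
    rw [← Finset.sum_sub_distrib, Finset.sum_congr rfl (fun j _ => hinner j),
      Finset.sum_sub_distrib, sum_if_pull, sum_if_pull, ← Finset.mul_sum, ← Finset.mul_sum]
  rw [sub_eq_iff_eq_add] at hHam
  rw [hHam]
  -- now case analysis on `i`
  rcases Nat.lt_or_ge i 1 with hi0 | hi1
  · -- i = 0 : only the boundary flow at the left end survives
    have hie : i = 0 := by omega
    subst hie
    have hz : ∀ k ∈ Finset.Icc 1 n,
        ((if k ≤ n-1 then (wt T1 Tn 0 k - bet T1 Tn 0 k) *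
            (∑ j, nth x.1 k j *
              fderiv ℝ U2 (nth x.2.1 k - nth x.2.1 (k+1)) (Pi.single j 1)) else 0)
         - (if 2 ≤ k then (wt T1 Tn 0 (k-1) - bet T1 Tn 0 k) *
            (∑ j, nth x.1 k j *
              fderiv ℝ U2 (nth x.2.1 (k-1) - nth x.2.1 (k-1+1)) (Pi.single j 1)) else 0))
        = 0 := by
      intro k hk
      rw [Finset.mem_Icc] at hk
      split_ifs with h1 h2 h2
      · rw [wt_sub_bet_ne (by omega), wt_pred_sub_bet_ne h2 (by omega)]; ring
      · rw [wt_sub_bet_ne (by omega)]; ring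
      · rw [wt_pred_sub_bet_ne h2 (by omega)]; ring
      · ring
    rw [Finset.sum_congr rfl hz, Finset.sum_const, smul_zero]
    rw [bet, if_neg (by omega), bet, if_neg (by omega)]
    rw [sigmaF, flow, if_pos rfl, dotp]
    rw [show (∑ j, nth x.1 1 j * (x.2.2.1 j * (1/T1)))
        = (1/T1) * ∑ j, x.2.2.1 j * nth x.1 1 j from by
      rw [Finset.mul_sum]; exact Finset.sum_congr rfl fun j _ => by ring]
    rw [show (∑ j, nth x.1 n j * (x.2.2.2 j * (1/Tn)))
        = (1/Tn) * ∑ j, x.2.2.2 j * nth x.1 n j from by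
      rw [Finset.mul_sum]; exact Finset.sum_congr rfl fun j _ => by ring]
    rw [show (∑ j, x.2.2.1 j * ((1/Tn) * nth x.1 1 j))
        = (1/Tn) * ∑ j, x.2.2.1 j * nth x.1 1 j from by
      rw [Finset.mul_sum]; exact Finset.sum_congr rfl fun j _ => by ring]
    rw [show (∑ j, x.2.2.2 j * ((1/Tn) * nth x.1 n j))
        = (1/Tn) * ∑ j, x.2.2.2 j * nth x.1 n j from by
      rw [Finset.mul_sum]; exact Finset.sum_congr rfl fun j _ => by ring]
    ring
  · rcases Nat.lt_or_ge i n with hin | hin'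
    · -- 1 ≤ i ≤ n-1 : the bulk flow through bond i survives
      have hz : ∀ k ∈ Finset.Icc 1 n,
          ((if k ≤ n-1 then (wt T1 Tn i k - bet T1 Tn i k) *
              (∑ j, nth x.1 k j *
                fderiv ℝ U2 (nth x.2.1 k - nth x.2.1 (k+1)) (Pi.single j 1)) else 0)
           - (if 2 ≤ k then (wt T1 Tn i (k-1) - bet T1 Tn i k) *
              (∑ j, nth x.1 k j *
                fderiv ℝ U2 (nth x.2.1 (k-1) - nth x.2.1 (k-1+1)) (Pi.single j 1)) else 0))
          = (if k = i then ((1/Tn - 1/T1)/2) *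
              (∑ j, nth x.1 k j *
                fderiv ℝ U2 (nth x.2.1 k - nth x.2.1 (k+1)) (Pi.single j 1)) else 0)
            + (if k = i+1 then ((1/Tn - 1/T1)/2) *
              (∑ j, nth x.1 k j *
                fderiv ℝ U2 (nth x.2.1 (k-1) - nth x.2.1 (k-1+1)) (Pi.single j 1)) else 0) := by
        intro k hk
        rw [Finset.mem_Icc] at hk
        by_cases h1 : k = i
        · subst h1
          rw [if_pos (by omega : k ≤ n-1), if_pos rfl, if_neg (by omega : ¬ k = k+1),
            wt_sub_bet_eq]
          split_ifs with h2
          · rw [wt_pred_sub_bet_ne h2 (by omega)]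
            ring
          · ring
        · by_cases h2 : k = i+1
          · subst h2
            rw [if_neg h1, if_pos rfl, if_pos (by omega : 2 ≤ i+1), wt_pred_sub_bet_eq]
            split_ifs with h3
            · rw [wt_sub_bet_ne h1]
              ring
            · ring
          · rw [if_neg h1, if_neg h2, wt_sub_bet_ne h1]
            by_cases hc : 2 ≤ k
            · rw [wt_pred_sub_bet_ne hc h2]
              split_ifs <;> ring
            · rw [if_neg hc]
              split_ifs <;> ring
      rw [Finset.sum_congr rfl hz, Finset.sum_add_distrib,
        Finset.sum_ite_eq' (Finset.Icc 1 n) i, Finset.sum_ite_eq' (Finset.Icc 1 n) (i+1),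
        if_pos (Finset.mem_Icc.mpr ⟨by omega, by omega⟩),
        if_pos (Finset.mem_Icc.mpr ⟨by omega, by omega⟩)]
      rw [bet, if_pos (by omega : 1 ≤ i), bet, if_neg (by omega : ¬ n ≤ i)]
      rw [sigmaF, flow, if_neg (by omega : ¬ i = 0), if_neg (by omega : ¬ i = n)]
      simp only [Nat.add_sub_cancel]
      rw [show (∑ j, nth x.1 1 j * (x.2.2.1 j * (1/T1)))
          = (1/T1) * ∑ j, x.2.2.1 j * nth x.1 1 j from by
        rw [Finset.mul_sum]; exact Finset.sum_congr rfl fun j _ => by ring]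
      rw [show (∑ j, x.2.2.1 j * ((1/T1) * nth x.1 1 j))
          = (1/T1) * ∑ j, x.2.2.1 j * nth x.1 1 j from by
        rw [Finset.mul_sum]; exact Finset.sum_congr rfl fun j _ => by ring]
      rw [show (∑ j, nth x.1 n j * (x.2.2.2 j * (1/Tn)))
          = (1/Tn) * ∑ j, x.2.2.2 j * nth x.1 n j from by
        rw [Finset.mul_sum]; exact Finset.sum_congr rfl fun j _ => by ring]
      rw [show (∑ j, x.2.2.2 j * ((1/Tn) * nth x.1 n j))
          = (1/Tn) * ∑ j, x.2.2.2 j * nth x.1 n j from by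
        rw [Finset.mul_sum]; exact Finset.sum_congr rfl fun j _ => by ring]
      rw [show (∑ j, (nth x.1 i j + nth x.1 (i+1) j) / 2 *
            fderiv ℝ U2 (nth x.2.1 i - nth x.2.1 (i+1)) (Pi.single j 1))
          = (1/2) * ((∑ j, nth x.1 i j *
              fderiv ℝ U2 (nth x.2.1 i - nth x.2.1 (i+1)) (Pi.single j 1))
            + (∑ j, nth x.1 (i+1) j *
              fderiv ℝ U2 (nth x.2.1 i - nth x.2.1 (i+1)) (Pi.single j 1))) from by
        rw [← Finset.sum_add_distrib, Finset.mul_sum]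
        exact Finset.sum_congr rfl fun j _ => by ring]
      ring
    · -- i = n : only the boundary flow at the right end survives
      have hie : i = n := by omega
      subst hie
      have hz : ∀ k ∈ Finset.Icc 1 i,
          ((if k ≤ i-1 then (wt T1 Tn i k - bet T1 Tn i k) *
              (∑ j, nth x.1 k j *
                fderiv ℝ U2 (nth x.2.1 k - nth x.2.1 (k+1)) (Pi.single j 1)) else 0)
           - (if 2 ≤ k then (wt T1 Tn i (k-1) - bet T1 Tn i k) *
              (∑ j, nth x.1 k j *
                fderiv ℝ U2 (nth x.2.1 (k-1) - nth x.2.1 (k-1+1)) (Pi.single j 1)) else 0))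
          = 0 := by
        intro k hk
        rw [Finset.mem_Icc] at hk
        split_ifs with h1 h2 h2
        · rw [wt_sub_bet_ne (by omega), wt_pred_sub_bet_ne h2 (by omega)]; ring
        · rw [wt_sub_bet_ne (by omega)]; ring
        · rw [wt_pred_sub_bet_ne h2 (by omega)]; ring
        · ring
      rw [Finset.sum_congr rfl hz, Finset.sum_const, smul_zero]
      rw [bet, if_pos (by omega : 1 ≤ i), bet, if_pos (le_refl i)]
      rw [sigmaF, flow, if_neg (by omega : ¬ i = 0), if_pos rfl, dotp]
      rw [show (∑ j, nth x.1 1 j * (x.2.2.1 j * (1/T1)))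
          = (1/T1) * ∑ j, x.2.2.1 j * nth x.1 1 j from by
        rw [Finset.mul_sum]; exact Finset.sum_congr rfl fun j _ => by ring]
      rw [show (∑ j, x.2.2.1 j * ((1/T1) * nth x.1 1 j))
          = (1/T1) * ∑ j, x.2.2.1 j * nth x.1 1 j from by
        rw [Finset.mul_sum]; exact Finset.sum_congr rfl fun j _ => by ring]
      rw [show (∑ j, nth x.1 i j * (x.2.2.2 j * (1/Tn)))
          = (1/Tn) * ∑ j, x.2.2.2 j * nth x.1 i j from by
        rw [Finset.mul_sum]; exact Finset.sum_congr rfl fun j _ => by ring]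
      rw [show (∑ j, x.2.2.2 j * ((1/T1) * nth x.1 i j))
          = (1/T1) * ∑ j, x.2.2.2 j * nth x.1 i j from by
        rw [Finset.mul_sum]; exact Finset.sum_congr rfl fun j _ => by ring]
      ring


-- ## product rule with the exponential weight
lemma pd_exp {d n : ℕ} {R f : Phase d n → ℝ} {x : Phase d n} {LR : Phase d n →L[ℝ] ℝ}
    (hR : HasFDerivAt R LR x) (hf : DifferentiableAt ℝ f x) (al : ℝ) (v : Phase d n) :
    pd (fun y => Real.exp (al * R y) * f y) v x
      = Real.exp (al * R x) * (al * LR v * f x + pd f v x) := by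
  have h1 : HasFDerivAt (fun y => al * R y) (al • LR) x := hR.const_mul al
  have h2 : HasFDerivAt (fun y => Real.exp (al * R y))
      (Real.exp (al * R x) • (al • LR)) x :=
    by have := (Real.hasDerivAt_exp (al * R x)).comp_hasFDerivAt x h1; exact this
  have h3 := h2.fun_mul hf.hasFDerivAt
  rw [pd, h3.fderiv]
  simp only [ContinuousLinearMap.add_apply, ContinuousLinearMap.smul_apply, smul_eq_mul, pd]
  ring

lemma pd_exp' {d n : ℕ} {R f : Phase d n → ℝ} {x : Phase d n}
    (hR : DifferentiableAt ℝ R x) (hf : DifferentiableAt ℝ f x) (al : ℝ) (v : Phase d n) :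
    pd (fun y => Real.exp (al * R y) * f y) v x
      = Real.exp (al * R x) * (al * pd R v x * f x + pd f v x) :=
  pd_exp hR.hasFDerivAt hf al v

lemma contDiff_pd {d n : ℕ} {f : Phase d n → ℝ} (hf : ContDiff ℝ (⊤ : ℕ∞) f)
    (v : Phase d n) : ContDiff ℝ (⊤ : ℕ∞) (fun y => fderiv ℝ f y v) :=
  (hf.fderiv_right (m := (⊤ : ℕ∞)) (by exact_mod_cast le_top)).clm_apply contDiff_const

lemma differentiable_pd {d n : ℕ} {f : Phase d n → ℝ} (hf : ContDiff ℝ (⊤ : ℕ∞) f)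
    (v : Phase d n) : Differentiable ℝ (fun y => fderiv ℝ f y v) :=
  (contDiff_pd hf v).differentiable (by simp)

-- second derivative of the conjugated function in the r-directions
lemma pd2_exp_eR1 {d n : ℕ} {U1 U2 : Vec d → ℝ} {T1 Tn : ℝ} {i : ℕ} {f : Phase d n → ℝ}
    (hU1 : ContDiff ℝ (⊤ : ℕ∞) U1) (hU2 : ContDiff ℝ (⊤ : ℕ∞) U2)
    (hi : i ≤ n) (hn : 1 ≤ n) (hf : ContDiff ℝ (⊤ : ℕ∞) f)
    (al : ℝ) (j : Fin d) (x : Phase d n) :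
    pd2 (fun y => Real.exp (al * Rfun d n U1 U2 T1 Tn i y) * f y) (eR1 d n j) x
      = Real.exp (al * Rfun d n U1 U2 T1 Tn i x) *
          (al * (1/T1) * f x + al^2 * (x.2.2.1 j * (1/T1))^2 * f x
            + 2 * al * (x.2.2.1 j * (1/T1)) * pd f (eR1 d n j) x
            + pd2 f (eR1 d n j) x) := by
  have hfd : Differentiable ℝ f := hf.differentiable (by simp)
  have hstep : (fun y => fderiv ℝ
        (fun z => Real.exp (al * Rfun d n U1 U2 T1 Tn i z) * f z) y (eR1 d n j))
      = fun y => Real.exp (al * Rfun d n U1 U2 T1 Tn i y) *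
          (al * (y.2.2.1 j * (1/T1)) * f y + fderiv ℝ f y (eR1 d n j)) := by
    funext y
    have h := pd_exp (hasFDerivAt_Rfun (T1:=T1) (Tn:=Tn) hU1 hU2 hi hn y) (hfd y) al (eR1 d n j)
    have hval : DR d n U1 U2 T1 Tn i y (eR1 d n j) = y.2.2.1 j * (1/T1) := by
      have h2 := pd_R_eR1 (T1:=T1) (Tn:=Tn) hU1 hU2 hi hn j y
      rwa [pd, (hasFDerivAt_Rfun hU1 hU2 hi hn y).fderiv] at h2
    rw [pd, pd] at h
    rw [h, hval]
  rw [pd2, hstep]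
  have hgd : DifferentiableAt ℝ
      (fun y : Phase d n => al * (y.2.2.1 j * (1/T1)) * f y + fderiv ℝ f y (eR1 d n j)) x := by
    apply DifferentiableAt.add
    · exact (((((ContinuousLinearMap.proj j).comp (piR1 d n)).differentiableAt).mul_const
        (1/T1)).const_mul al).mul (hfd x)
    · exact (differentiable_pd hf (eR1 d n j)) x
  have h2 : fderiv ℝ (fun y => Real.exp (al * Rfun d n U1 U2 T1 Tn i y) *
        (al * (y.2.2.1 j * (1/T1)) * f y + fderiv ℝ f y (eR1 d n j))) x (eR1 d n j)
      = Real.exp (al * Rfun d n U1 U2 T1 Tn i x) *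
          (al * DR d n U1 U2 T1 Tn i x (eR1 d n j) *
              (al * (x.2.2.1 j * (1/T1)) * f x + fderiv ℝ f x (eR1 d n j))
            + fderiv ℝ (fun y => al * (y.2.2.1 j * (1/T1)) * f y
                + fderiv ℝ f y (eR1 d n j)) x (eR1 d n j)) :=
    pd_exp (hasFDerivAt_Rfun (T1:=T1) (Tn:=Tn) hU1 hU2 hi hn x) hgd al (eR1 d n j)
  rw [h2]
  have hval : DR d n U1 U2 T1 Tn i x (eR1 d n j) = x.2.2.1 j * (1/T1) := by
    have h3 := pd_R_eR1 (T1:=T1) (Tn:=Tn) hU1 hU2 hi hn j x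
    rwa [pd, (hasFDerivAt_Rfun hU1 hU2 hi hn x).fderiv] at h3
  have hL : HasFDerivAt (fun y : Phase d n => al * (y.2.2.1 j * (1/T1)) * f y
        + fderiv ℝ f y (eR1 d n j))
      (((al * (x.2.2.1 j * (1/T1))) • fderiv ℝ f x
          + f x • (al • ((1/T1) • ((ContinuousLinearMap.proj j).comp (piR1 d n)))))
        + fderiv ℝ (fun y => fderiv ℝ f y (eR1 d n j)) x) x := by
    apply HasFDerivAt.add
    · exact (((((ContinuousLinearMap.proj j).comp (piR1 d n)).hasFDerivAt).mul_const
        (1/T1)).const_mul al).mul (hfd x).hasFDerivAt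
    · exact ((differentiable_pd hf (eR1 d n j)) x).hasFDerivAt
  rw [hL.fderiv, hval]
  simp only [ContinuousLinearMap.add_apply, ContinuousLinearMap.smul_apply, smul_eq_mul,
    ContinuousLinearMap.comp_apply, ContinuousLinearMap.proj_apply, piR1_apply, eR1_221,
    Pi.single_eq_same, pd, pd2]
  ring

lemma pd2_exp_eRn {d n : ℕ} {U1 U2 : Vec d → ℝ} {T1 Tn : ℝ} {i : ℕ} {f : Phase d n → ℝ}
    (hU1 : ContDiff ℝ (⊤ : ℕ∞) U1) (hU2 : ContDiff ℝ (⊤ : ℕ∞) U2)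
    (hi : i ≤ n) (hn : 1 ≤ n) (hf : ContDiff ℝ (⊤ : ℕ∞) f)
    (al : ℝ) (j : Fin d) (x : Phase d n) :
    pd2 (fun y => Real.exp (al * Rfun d n U1 U2 T1 Tn i y) * f y) (eRn d n j) x
      = Real.exp (al * Rfun d n U1 U2 T1 Tn i x) *
          (al * (1/Tn) * f x + al^2 * (x.2.2.2 j * (1/Tn))^2 * f x
            + 2 * al * (x.2.2.2 j * (1/Tn)) * pd f (eRn d n j) x
            + pd2 f (eRn d n j) x) := by
  have hfd : Differentiable ℝ f := hf.differentiable (by simp)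
  have hstep : (fun y => fderiv ℝ
        (fun z => Real.exp (al * Rfun d n U1 U2 T1 Tn i z) * f z) y (eRn d n j))
      = fun y => Real.exp (al * Rfun d n U1 U2 T1 Tn i y) *
          (al * (y.2.2.2 j * (1/Tn)) * f y + fderiv ℝ f y (eRn d n j)) := by
    funext y
    have h := pd_exp (hasFDerivAt_Rfun (T1:=T1) (Tn:=Tn) hU1 hU2 hi hn y) (hfd y) al (eRn d n j)
    have hval : DR d n U1 U2 T1 Tn i y (eRn d n j) = y.2.2.2 j * (1/Tn) := by
      have h2 := pd_R_eRn (T1:=T1) (Tn:=Tn) hU1 hU2 hi hn j y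
      rwa [pd, (hasFDerivAt_Rfun hU1 hU2 hi hn y).fderiv] at h2
    rw [pd, pd] at h
    rw [h, hval]
  rw [pd2, hstep]
  have hgd : DifferentiableAt ℝ
      (fun y : Phase d n => al * (y.2.2.2 j * (1/Tn)) * f y + fderiv ℝ f y (eRn d n j)) x := by
    apply DifferentiableAt.add
    · exact (((((ContinuousLinearMap.proj j).comp (piRn d n)).differentiableAt).mul_const
        (1/Tn)).const_mul al).mul (hfd x)
    · exact (differentiable_pd hf (eRn d n j)) x
  have h2 : fderiv ℝ (fun y => Real.exp (al * Rfun d n U1 U2 T1 Tn i y) *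
        (al * (y.2.2.2 j * (1/Tn)) * f y + fderiv ℝ f y (eRn d n j))) x (eRn d n j)
      = Real.exp (al * Rfun d n U1 U2 T1 Tn i x) *
          (al * DR d n U1 U2 T1 Tn i x (eRn d n j) *
              (al * (x.2.2.2 j * (1/Tn)) * f x + fderiv ℝ f x (eRn d n j))
            + fderiv ℝ (fun y => al * (y.2.2.2 j * (1/Tn)) * f y
                + fderiv ℝ f y (eRn d n j)) x (eRn d n j)) :=
    pd_exp (hasFDerivAt_Rfun (T1:=T1) (Tn:=Tn) hU1 hU2 hi hn x) hgd al (eRn d n j)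
  rw [h2]
  have hval : DR d n U1 U2 T1 Tn i x (eRn d n j) = x.2.2.2 j * (1/Tn) := by
    have h3 := pd_R_eRn (T1:=T1) (Tn:=Tn) hU1 hU2 hi hn j x
    rwa [pd, (hasFDerivAt_Rfun hU1 hU2 hi hn x).fderiv] at h3
  have hL : HasFDerivAt (fun y : Phase d n => al * (y.2.2.2 j * (1/Tn)) * f y
        + fderiv ℝ f y (eRn d n j))
      (((al * (x.2.2.2 j * (1/Tn))) • fderiv ℝ f x
          + f x • (al • ((1/Tn) • ((ContinuousLinearMap.proj j).comp (piRn d n)))))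
        + fderiv ℝ (fun y => fderiv ℝ f y (eRn d n j)) x) x := by
    apply HasFDerivAt.add
    · exact (((((ContinuousLinearMap.proj j).comp (piRn d n)).hasFDerivAt).mul_const
        (1/Tn)).const_mul al).mul (hfd x).hasFDerivAt
    · exact ((differentiable_pd hf (eRn d n j)) x).hasFDerivAt
  rw [hL.fderiv, hval]
  simp only [ContinuousLinearMap.add_apply, ContinuousLinearMap.smul_apply, smul_eq_mul,
    ContinuousLinearMap.comp_apply, ContinuousLinearMap.proj_apply, piRn_apply, eRn_222,
    Pi.single_eq_same, pd, pd2]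
  ring

-- second derivatives of `Rfun` itself in the r-directions
lemma pd2_R_eR1 {d n : ℕ} {U1 U2 : Vec d → ℝ} {T1 Tn : ℝ} {i : ℕ}
    (hU1 : ContDiff ℝ (⊤ : ℕ∞) U1) (hU2 : ContDiff ℝ (⊤ : ℕ∞) U2)
    (hi : i ≤ n) (hn : 1 ≤ n) (j : Fin d) (x : Phase d n) :
    pd2 (Rfun d n U1 U2 T1 Tn i) (eR1 d n j) x = 1/T1 := by
  rw [pd2, pd_R_eR1_fun hU1 hU2 hi hn j]
  have hL : HasFDerivAt (fun y : Phase d n => y.2.2.1 j * (1/T1))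
      ((1/T1) • ((ContinuousLinearMap.proj j).comp (piR1 d n))) x :=
    (((ContinuousLinearMap.proj j).comp (piR1 d n)).hasFDerivAt).mul_const (1/T1)
  rw [hL.fderiv]
  simp [Pi.single_eq_same]

lemma pd2_R_eRn {d n : ℕ} {U1 U2 : Vec d → ℝ} {T1 Tn : ℝ} {i : ℕ}
    (hU1 : ContDiff ℝ (⊤ : ℕ∞) U1) (hU2 : ContDiff ℝ (⊤ : ℕ∞) U2)
    (hi : i ≤ n) (hn : 1 ≤ n) (j : Fin d) (x : Phase d n) :
    pd2 (Rfun d n U1 U2 T1 Tn i) (eRn d n j) x = 1/Tn := by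
  rw [pd2, pd_R_eRn_fun hU1 hU2 hi hn j]
  have hL : HasFDerivAt (fun y : Phase d n => y.2.2.2 j * (1/Tn))
      ((1/Tn) • ((ContinuousLinearMap.proj j).comp (piRn d n))) x :=
    (((ContinuousLinearMap.proj j).comp (piRn d n)).hasFDerivAt).mul_const (1/Tn)
  rw [hL.fderiv]
  simp [Pi.single_eq_same]

-- `gen0` applied to `Rfun`
lemma gen0_R {d n : ℕ} {U1 U2 : Vec d → ℝ} {ga T1 Tn : ℝ} {i : ℕ}
    (hU1 : ContDiff ℝ (⊤ : ℕ∞) U1) (hU2 : ContDiff ℝ (⊤ : ℕ∞) U2)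
    (hT1 : T1 ≠ 0) (hTn : Tn ≠ 0)
    (hi : i ≤ n) (hn : 1 ≤ n) (x : Phase d n) :
    gen0 d n ga T1 Tn (Rfun d n U1 U2 T1 Tn i) x
      = ga * (2*(d:ℝ) - dotp x.2.2.1 x.2.2.1 * (1/T1) - dotp x.2.2.2 x.2.2.2 * (1/Tn)) := by
  rw [gen0]
  rw [show (∑ j, pd2 (Rfun d n U1 U2 T1 Tn i) (eR1 d n j) x) = (d:ℝ) * (1/T1) from by
    rw [Finset.sum_congr rfl fun j _ => pd2_R_eR1 hU1 hU2 hi hn j x, Finset.sum_const,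
      Finset.card_univ, Fintype.card_fin, nsmul_eq_mul]]
  rw [show (∑ j, pd2 (Rfun d n U1 U2 T1 Tn i) (eRn d n j) x) = (d:ℝ) * (1/Tn) from by
    rw [Finset.sum_congr rfl fun j _ => pd2_R_eRn hU1 hU2 hi hn j x, Finset.sum_const,
      Finset.card_univ, Fintype.card_fin, nsmul_eq_mul]]
  rw [show (∑ j, x.2.2.1 j * pd (Rfun d n U1 U2 T1 Tn i) (eR1 d n j) x)
      = dotp x.2.2.1 x.2.2.1 * (1/T1) from by
    rw [Finset.sum_congr rfl fun j _ => by rw [pd_R_eR1 hU1 hU2 hi hn j x], dotp,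
      Finset.sum_mul]
    exact Finset.sum_congr rfl fun j _ => by ring]
  rw [show (∑ j, x.2.2.2 j * pd (Rfun d n U1 U2 T1 Tn i) (eRn d n j) x)
      = dotp x.2.2.2 x.2.2.2 * (1/Tn) from by
    rw [Finset.sum_congr rfl fun j _ => by rw [pd_R_eRn hU1 hU2 hi hn j x], dotp,
      Finset.sum_mul]
    exact Finset.sum_congr rfl fun j _ => by ring]
  field_simp
  ring


-- ## `gen0` and `gen1` of the conjugated function
lemma gen0_exp {d n : ℕ} {U1 U2 : Vec d → ℝ} {T1 Tn : ℝ} {i : ℕ} {f : Phase d n → ℝ}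
    (hU1 : ContDiff ℝ (⊤ : ℕ∞) U1) (hU2 : ContDiff ℝ (⊤ : ℕ∞) U2)
    (hT1 : T1 ≠ 0) (hTn : Tn ≠ 0)
    (hi : i ≤ n) (hn : 1 ≤ n) (hf : ContDiff ℝ (⊤ : ℕ∞) f) (ga al : ℝ) (x : Phase d n) :
    gen0 d n ga T1 Tn (fun y => Real.exp (al * Rfun d n U1 U2 T1 Tn i y) * f y) x
      = Real.exp (al * Rfun d n U1 U2 T1 Tn i x) *
          (gen0 d n ga T1 Tn f x
            + al * ga * (2*(d:ℝ) - dotp x.2.2.1 x.2.2.1 * (1/T1)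
                - dotp x.2.2.2 x.2.2.2 * (1/Tn)) * f x
            + al^2 * ga * (dotp x.2.2.1 x.2.2.1 * (1/T1)
                + dotp x.2.2.2 x.2.2.2 * (1/Tn)) * f x
            + 2*al*ga*((∑ j, x.2.2.1 j * pd f (eR1 d n j) x)
                + (∑ j, x.2.2.2 j * pd f (eRn d n j) x))) := by
  have hfd : Differentiable ℝ f := hf.differentiable (by simp)
  have hRd : DifferentiableAt ℝ (Rfun d n U1 U2 T1 Tn i) x :=
    (hasFDerivAt_Rfun (T1:=T1) (Tn:=Tn) hU1 hU2 hi hn x).differentiableAt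
  have h1 : ∀ j ∈ Finset.univ,
      pd2 (fun y => Real.exp (al * Rfun d n U1 U2 T1 Tn i y) * f y) (eR1 d n j) x
      = Real.exp (al * Rfun d n U1 U2 T1 Tn i x) * (al*(1/T1)*f x)
        + (Real.exp (al * Rfun d n U1 U2 T1 Tn i x) * (al^2*(1/T1)^2*f x))
            * (x.2.2.1 j * x.2.2.1 j)
        + (Real.exp (al * Rfun d n U1 U2 T1 Tn i x) * (2*al*(1/T1)))
            * (x.2.2.1 j * pd f (eR1 d n j) x)
        + Real.exp (al * Rfun d n U1 U2 T1 Tn i x) * pd2 f (eR1 d n j) x := fun j _ => by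
    rw [pd2_exp_eR1 hU1 hU2 hi hn hf al j x]; ring
  have h2 : ∀ j ∈ Finset.univ,
      pd2 (fun y => Real.exp (al * Rfun d n U1 U2 T1 Tn i y) * f y) (eRn d n j) x
      = Real.exp (al * Rfun d n U1 U2 T1 Tn i x) * (al*(1/Tn)*f x)
        + (Real.exp (al * Rfun d n U1 U2 T1 Tn i x) * (al^2*(1/Tn)^2*f x))
            * (x.2.2.2 j * x.2.2.2 j)
        + (Real.exp (al * Rfun d n U1 U2 T1 Tn i x) * (2*al*(1/Tn)))
            * (x.2.2.2 j * pd f (eRn d n j) x)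
        + Real.exp (al * Rfun d n U1 U2 T1 Tn i x) * pd2 f (eRn d n j) x := fun j _ => by
    rw [pd2_exp_eRn hU1 hU2 hi hn hf al j x]; ring
  have h3 : ∀ j ∈ Finset.univ,
      x.2.2.1 j * pd (fun y => Real.exp (al * Rfun d n U1 U2 T1 Tn i y) * f y) (eR1 d n j) x
      = (Real.exp (al * Rfun d n U1 U2 T1 Tn i x) * (al*(1/T1)*f x)) * (x.2.2.1 j * x.2.2.1 j)
        + Real.exp (al * Rfun d n U1 U2 T1 Tn i x)
            * (x.2.2.1 j * pd f (eR1 d n j) x) := fun j _ => by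
    rw [pd_exp' hRd (hfd x) al, pd_R_eR1 hU1 hU2 hi hn j x]; ring
  have h4 : ∀ j ∈ Finset.univ,
      x.2.2.2 j * pd (fun y => Real.exp (al * Rfun d n U1 U2 T1 Tn i y) * f y) (eRn d n j) x
      = (Real.exp (al * Rfun d n U1 U2 T1 Tn i x) * (al*(1/Tn)*f x)) * (x.2.2.2 j * x.2.2.2 j)
        + Real.exp (al * Rfun d n U1 U2 T1 Tn i x)
            * (x.2.2.2 j * pd f (eRn d n j) x) := fun j _ => by
    rw [pd_exp' hRd (hfd x) al, pd_R_eRn hU1 hU2 hi hn j x]; ring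
  rw [gen0, Finset.sum_congr rfl h1, Finset.sum_congr rfl h2, Finset.sum_congr rfl h3,
    Finset.sum_congr rfl h4]
  simp only [Finset.sum_add_distrib, Finset.sum_const, Finset.card_univ, Fintype.card_fin,
    nsmul_eq_mul, ← Finset.mul_sum]
  rw [gen0]
  simp only [dotp]
  field_simp
  ring

lemma gen1_exp {d n : ℕ} {U1 U2 : Vec d → ℝ} {T1 Tn : ℝ} {i : ℕ} {f : Phase d n → ℝ}
    (hU1 : ContDiff ℝ (⊤ : ℕ∞) U1) (hU2 : ContDiff ℝ (⊤ : ℕ∞) U2)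
    (hi : i ≤ n) (hn : 1 ≤ n) (hf : ContDiff ℝ (⊤ : ℕ∞) f) (lam al : ℝ) (x : Phase d n) :
    gen1 d n U1 U2 lam (fun y => Real.exp (al * Rfun d n U1 U2 T1 Tn i y) * f y) x
      = Real.exp (al * Rfun d n U1 U2 T1 Tn i x) * gen1 d n U1 U2 lam f x
        + al * Real.exp (al * Rfun d n U1 U2 T1 Tn i x) * f x *
            gen1 d n U1 U2 lam (Rfun d n U1 U2 T1 Tn i) x := by
  have hfd : Differentiable ℝ f := hf.differentiable (by simp)
  have hRd : DifferentiableAt ℝ (Rfun d n U1 U2 T1 Tn i) x :=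
    (hasFDerivAt_Rfun (T1:=T1) (Tn:=Tn) hU1 hU2 hi hn x).differentiableAt
  have key : ∀ (c : ℝ) (v : Phase d n), c *
      pd (fun y => Real.exp (al * Rfun d n U1 U2 T1 Tn i y) * f y) v x
      = Real.exp (al * Rfun d n U1 U2 T1 Tn i x) * (c * pd f v x)
        + (al * Real.exp (al * Rfun d n U1 U2 T1 Tn i x) * f x) *
            (c * pd (Rfun d n U1 U2 T1 Tn i) v x) := fun c v => by
    rw [pd_exp' hRd (hfd x) al v]; ring
  have e1 : (∑ j, nth x.1 1 j *
      pd (fun y => Real.exp (al * Rfun d n U1 U2 T1 Tn i y) * f y) (eR1 d n j) x)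
      = Real.exp (al * Rfun d n U1 U2 T1 Tn i x) * (∑ j, nth x.1 1 j * pd f (eR1 d n j) x)
        + (al * Real.exp (al * Rfun d n U1 U2 T1 Tn i x) * f x) *
            (∑ j, nth x.1 1 j * pd (Rfun d n U1 U2 T1 Tn i) (eR1 d n j) x) := by
    rw [Finset.sum_congr rfl fun j _ => key (nth x.1 1 j) (eR1 d n j),
      Finset.sum_add_distrib, ← Finset.mul_sum, ← Finset.mul_sum]
  have e2 : (∑ j, nth x.1 n j *
      pd (fun y => Real.exp (al * Rfun d n U1 U2 T1 Tn i y) * f y) (eRn d n j) x)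
      = Real.exp (al * Rfun d n U1 U2 T1 Tn i x) * (∑ j, nth x.1 n j * pd f (eRn d n j) x)
        + (al * Real.exp (al * Rfun d n U1 U2 T1 Tn i x) * f x) *
            (∑ j, nth x.1 n j * pd (Rfun d n U1 U2 T1 Tn i) (eRn d n j) x) := by
    rw [Finset.sum_congr rfl fun j _ => key (nth x.1 n j) (eRn d n j),
      Finset.sum_add_distrib, ← Finset.mul_sum, ← Finset.mul_sum]
  have e3 : (∑ j, x.2.2.1 j *
      pd (fun y => Real.exp (al * Rfun d n U1 U2 T1 Tn i y) * f y) (eP d n 1 j) x)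
      = Real.exp (al * Rfun d n U1 U2 T1 Tn i x) * (∑ j, x.2.2.1 j * pd f (eP d n 1 j) x)
        + (al * Real.exp (al * Rfun d n U1 U2 T1 Tn i x) * f x) *
            (∑ j, x.2.2.1 j * pd (Rfun d n U1 U2 T1 Tn i) (eP d n 1 j) x) := by
    rw [Finset.sum_congr rfl fun j _ => key (x.2.2.1 j) (eP d n 1 j),
      Finset.sum_add_distrib, ← Finset.mul_sum, ← Finset.mul_sum]
  have e4 : (∑ j, x.2.2.2 j *
      pd (fun y => Real.exp (al * Rfun d n U1 U2 T1 Tn i y) * f y) (eP d n n j) x)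
      = Real.exp (al * Rfun d n U1 U2 T1 Tn i x) * (∑ j, x.2.2.2 j * pd f (eP d n n j) x)
        + (al * Real.exp (al * Rfun d n U1 U2 T1 Tn i x) * f x) *
            (∑ j, x.2.2.2 j * pd (Rfun d n U1 U2 T1 Tn i) (eP d n n j) x) := by
    rw [Finset.sum_congr rfl fun j _ => key (x.2.2.2 j) (eP d n n j),
      Finset.sum_add_distrib, ← Finset.mul_sum, ← Finset.mul_sum]
  have e5 : (∑ k ∈ Finset.Icc 1 n, ∑ j, nth x.1 k j *
      pd (fun y => Real.exp (al * Rfun d n U1 U2 T1 Tn i y) * f y) (eQ d n k j) x)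
      = Real.exp (al * Rfun d n U1 U2 T1 Tn i x) *
          (∑ k ∈ Finset.Icc 1 n, ∑ j, nth x.1 k j * pd f (eQ d n k j) x)
        + (al * Real.exp (al * Rfun d n U1 U2 T1 Tn i x) * f x) *
          (∑ k ∈ Finset.Icc 1 n, ∑ j, nth x.1 k j *
            pd (Rfun d n U1 U2 T1 Tn i) (eQ d n k j) x) := by
    have inner : ∀ k ∈ Finset.Icc 1 n, (∑ j, nth x.1 k j *
        pd (fun y => Real.exp (al * Rfun d n U1 U2 T1 Tn i y) * f y) (eQ d n k j) x)
        = Real.exp (al * Rfun d n U1 U2 T1 Tn i x) *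
            (∑ j, nth x.1 k j * pd f (eQ d n k j) x)
          + (al * Real.exp (al * Rfun d n U1 U2 T1 Tn i x) * f x) *
            (∑ j, nth x.1 k j * pd (Rfun d n U1 U2 T1 Tn i) (eQ d n k j) x) := fun k _ => by
      rw [Finset.sum_congr rfl fun j _ => key (nth x.1 k j) (eQ d n k j),
        Finset.sum_add_distrib, ← Finset.mul_sum, ← Finset.mul_sum]
    rw [Finset.sum_congr rfl inner, Finset.sum_add_distrib, ← Finset.mul_sum, ← Finset.mul_sum]
  have e6 : (∑ k ∈ Finset.Icc 1 n, ∑ j,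
      fderiv ℝ (Vpot d n U1 U2) x.2.1 (basisQ d n k j) *
      pd (fun y => Real.exp (al * Rfun d n U1 U2 T1 Tn i y) * f y) (eP d n k j) x)
      = Real.exp (al * Rfun d n U1 U2 T1 Tn i x) *
          (∑ k ∈ Finset.Icc 1 n, ∑ j, fderiv ℝ (Vpot d n U1 U2) x.2.1 (basisQ d n k j)
            * pd f (eP d n k j) x)
        + (al * Real.exp (al * Rfun d n U1 U2 T1 Tn i x) * f x) *
          (∑ k ∈ Finset.Icc 1 n, ∑ j, fderiv ℝ (Vpot d n U1 U2) x.2.1 (basisQ d n k j) *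
            pd (Rfun d n U1 U2 T1 Tn i) (eP d n k j) x) := by
    have inner : ∀ k ∈ Finset.Icc 1 n, (∑ j,
        fderiv ℝ (Vpot d n U1 U2) x.2.1 (basisQ d n k j) *
        pd (fun y => Real.exp (al * Rfun d n U1 U2 T1 Tn i y) * f y) (eP d n k j) x)
        = Real.exp (al * Rfun d n U1 U2 T1 Tn i x) *
            (∑ j, fderiv ℝ (Vpot d n U1 U2) x.2.1 (basisQ d n k j) * pd f (eP d n k j) x)
          + (al * Real.exp (al * Rfun d n U1 U2 T1 Tn i x) * f x) *
            (∑ j, fderiv ℝ (Vpot d n U1 U2) x.2.1 (basisQ d n k j) *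
              pd (Rfun d n U1 U2 T1 Tn i) (eP d n k j) x) := fun k _ => by
      rw [Finset.sum_congr rfl fun j _ =>
          key (fderiv ℝ (Vpot d n U1 U2) x.2.1 (basisQ d n k j)) (eP d n k j),
        Finset.sum_add_distrib, ← Finset.mul_sum, ← Finset.mul_sum]
    rw [Finset.sum_congr rfl inner, Finset.sum_add_distrib, ← Finset.mul_sum, ← Finset.mul_sum]
  rw [gen1, e1, e2, e3, e4, e5, e6, gen1, gen1]
  ring

-- MORE LEMMAS HERE

/-- `e^{-αR_i} (L - ασ_i) e^{αR_i} = L̄_α` for all `0 ≤ i ≤ n`;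
in particular all the `L - ασ_i` are conjugate to the same operator `L̄_α`. -/
theorem gen_sub_sigma_conjugation
    (d n : ℕ) (hd : 1 ≤ d) (hn : 2 ≤ n)
    (U1 U2 : Vec d → ℝ) (hU1 : ContDiff ℝ (⊤ : ℕ∞) U1) (hU2 : ContDiff ℝ (⊤ : ℕ∞) U2)
    (ga lam T1 Tn : ℝ) (hga : 0 < ga) (hT1 : 0 < T1) (hTn : 0 < Tn)
    (al : ℝ) (i : ℕ) (hi : i ≤ n)
    (f : Phase d n → ℝ) (hf : ContDiff ℝ (⊤ : ℕ∞) f) :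
    ∀ x : Phase d n,
      Real.exp (-(al * Rfun d n U1 U2 T1 Tn i x)) *
        (gen d n U1 U2 ga lam T1 Tn
            (fun y => Real.exp (al * Rfun d n U1 U2 T1 Tn i y) * f y) x
         - al * sigmaF d n U2 lam T1 Tn i x *
            (Real.exp (al * Rfun d n U1 U2 T1 Tn i x) * f x))
      = genBar d n U1 U2 ga lam T1 Tn al f x := by
  intro x
  have hn1 : 1 ≤ n := by omega
  have hT1' : T1 ≠ 0 := ne_of_gt hT1
  have hTn' : Tn ≠ 0 := ne_of_gt hTn
  rw [gen, gen0_exp hU1 hU2 hT1' hTn' hi hn1 hf ga al x,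
    gen1_exp hU1 hU2 hi hn1 hf lam al x, gen1_R hU1 hU2 hn hi x,
    genBar, genTilde, gen]
  rw [Real.exp_neg]
  have hE : Real.exp (al * Rfun d n U1 U2 T1 Tn i x) ≠ 0 := Real.exp_ne_zero _
  field_simp
  ring
end EP
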